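/- Let (A,B) be an algebraic Cartan pair. Then there is a unique conditional expectation from A to B: any two conditional expectations P₁, P₂ : A → B are equal. -/

import Mathlib

namespace QCP

variable {R : Type*} [CommRing R] {A : Type*} [NonUnitalRing A]
  [Module R A] [SMulCommClass R A A] [IsScalarTower R A A]

/-- `e` is an idempotent element of the subalgebra `B`, i.e. `e ∈ I(B)`. -/
def IsIdem (B : NonUnitalSubalgebra R A) (e : A) : Prop :=
  e ∈ B ∧ e * e = e

/-- The idempotents of `B` form a set of local units for `A`. -/
def HasLocalUnits (B : NonUnitalSubalgebra R A) : Prop :=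
  ∀ F : Finset A, ∃ e : A, IsIdem B e ∧ ∀ a ∈ F, e * a = a ∧ a * e = a

/-- `k` is a dagger for `n` relative to `B`. -/
def IsDagger (B : NonUnitalSubalgebra R A) (n k : A) : Prop :=
  k * n * k = k ∧ n * k * n = n ∧ ∀ b ∈ B, k * b * n ∈ B ∧ n * b * k ∈ B

/-- `n` belongs to the normaliser `N(B)` of `B` in `A`. -/
def MemNormaliser (B : NonUnitalSubalgebra R A) (n : A) : Prop :=
  ∃ k : A, IsDagger B n k

/-- Condition (WT): `B` is without torsion. -/
def CondWT (B : NonUnitalSubalgebra R A) : Prop :=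
  ∀ e : A, e ∈ B → e * e = e → ∀ t : R, t • e = 0 → t = 0 ∨ e = 0

/-- The partial order on `N(B)`: `m ≤ n` iff `m = n·e` for some `e ∈ I(B)`. -/
def NormLE (B : NonUnitalSubalgebra R A) (m n : A) : Prop :=
  ∃ e : A, IsIdem B e ∧ m = n * e

/-- A filter of `N(B)`. -/
def IsFilterOf (B : NonUnitalSubalgebra R A) (U : Set A) : Prop :=
  (∀ n ∈ U, MemNormaliser B n) ∧ (0 : A) ∉ U ∧
    (∀ m ∈ U, ∀ n : A, MemNormaliser B n → NormLE B m n → n ∈ U) ∧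
    (∀ m ∈ U, ∀ n ∈ U, ∃ p ∈ U, NormLE B p m ∧ NormLE B p n)

/-- An ultrafilter of `N(B)`: a filter maximal among filters under inclusion. -/
def IsUltrafilterOf (B : NonUnitalSubalgebra R A) (U : Set A) : Prop :=
  IsFilterOf B U ∧ ∀ V : Set A, IsFilterOf B V → U ⊆ V → U = V

/-- `P` is a conditional expectation from `A` onto `B`. -/
def IsCondExp (B : NonUnitalSubalgebra R A) (P : A →ₗ[R] A) : Prop :=
  (∀ a : A, P a ∈ B) ∧ (∀ b ∈ B, P b = b) ∧
    (∀ a : A, ∀ b ∈ B, ∀ b' ∈ B, P (b * a * b') = b * P a * b')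

/-- The conditional expectation `P` is faithful. -/
def IsFaithful (B : NonUnitalSubalgebra R A) (P : A →ₗ[R] A) : Prop :=
  ∀ a : A, a ≠ 0 → ∃ n : A, MemNormaliser B n ∧ P (n * a) ≠ 0

/-- The conditional expectation `P` is implemented by idempotents. -/
def ImplementedByIdem (B : NonUnitalSubalgebra R A) (P : A →ₗ[R] A) : Prop :=
  ∀ n : A, MemNormaliser B n → ∃ e : A, IsIdem B e ∧ P n = n * e ∧ P n = e * n

/-- `(A, B)` is an algebraic pair: `B` is commutative, satisfies (WT), `I(B)` is a set of
local units for `A`, `B` is spanned by `I(B)`, `A` is spanned by `N(B)`, and there is a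
faithful conditional expectation `A → B`. -/
def IsAlgebraicPair (B : NonUnitalSubalgebra R A) : Prop :=
  (∀ x ∈ B, ∀ y ∈ B, x * y = y * x) ∧ CondWT B ∧ HasLocalUnits B ∧
    (B : Set A) = (Submodule.span R {e : A | IsIdem B e} : Set A) ∧
    Submodule.span R {n : A | MemNormaliser B n} = ⊤ ∧
    ∃ P : A →ₗ[R] A, IsCondExp B P ∧ IsFaithful B P

/-- A free normaliser: an element of `N(B)` that lies in `B` or squares to zero. -/
def IsFreeNormaliser (B : NonUnitalSubalgebra R A) (n : A) : Prop :=
  MemNormaliser B n ∧ (n ∈ B ∨ n * n = 0)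

/-- `(A, B)` is an algebraic diagonal pair. -/
def IsDiagonalPair (B : NonUnitalSubalgebra R A) : Prop :=
  IsAlgebraicPair B ∧ Submodule.span R {n : A | IsFreeNormaliser B n} = ⊤

/-- `(A, B)` is an algebraic Cartan pair: `B` is a maximal commutative subalgebra. -/
def IsCartanPair (B : NonUnitalSubalgebra R A) : Prop :=
  IsAlgebraicPair B ∧ ∀ a : A, (∀ b ∈ B, a * b = b * a) → a ∈ B

/-- `(A, B)` is an algebraic quasi-Cartan pair. -/
def IsQuasiCartanPair (B : NonUnitalSubalgebra R A) : Prop :=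
  IsAlgebraicPair B ∧
    ∃ P : A →ₗ[R] A, IsCondExp B P ∧ IsFaithful B P ∧ ImplementedByIdem B P

end QCP

/-!
Since `A` is spanned by `N(B)`, it suffices to compare `p = P₁ n` and `c = P₂ n` for a normaliser
`n` with dagger `k`. Local units make every conditional expectation a `B`-bimodule map, so
`P n = P (n k n) = (n k) P n`, and maximality of `B` puts `k P n` in `B`. Applying another
expectation `Q`, which fixes `P n ∈ B`, gives `P n = Q n · (k P n)`. Hence `p = c (k p)`,
`c = c (k c)` and `c = p (k c)`, and commutativity of `B` yields
`p = c (k c) (k p) = c (k p) (k c) = p (k c) = c`.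
-/

namespace QCP

variable {R : Type*} [CommRing R] {A : Type*} [NonUnitalRing A] [Module R A]
  {B : NonUnitalSubalgebra R A}

theorem HasLocalUnits.exists_isIdem (hLU : HasLocalUnits B) (a : A) :
    ∃ e, IsIdem B e ∧ e * a = a ∧ a * e = a := by
  classical
  obtain ⟨e, he, hea⟩ := hLU {a}
  exact ⟨e, he, hea a (Finset.mem_singleton_self a)⟩

theorem IsDagger.symm {n k : A} (h : IsDagger B n k) : IsDagger B k n :=
  ⟨h.2.1, h.1, fun b hb => (h.2.2 b hb).symm⟩

theorem IsDagger.mul_mem (hLU : HasLocalUnits B) {n k : A} (h : IsDagger B n k) :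
    n * k ∈ B := by
  obtain ⟨e, ⟨heB, -⟩, -, hne⟩ := hLU.exists_isIdem n
  simpa only [hne] using (h.2.2 e heB).2

theorem IsCondExp.map_mul_idem {P : A →ₗ[R] A} (hP : IsCondExp B P) {a e : A}
    (he : IsIdem B e) (hea : e * a = a) (hae : a * e = a) :
    e * P a = P a ∧ P a * e = P a := by
  obtain ⟨heB, hee⟩ := he
  have hPa : e * P a * e = P a := by
    simpa only [hea, hae] using (hP.2.2 a e heB e heB).symm
  constructor
  · rw [← hPa, ← mul_assoc, ← mul_assoc, hee]
  · rw [← hPa, mul_assoc _ e e, hee]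

theorem IsCondExp.map_mul_left (hLU : HasLocalUnits B) {P : A →ₗ[R] A} (hP : IsCondExp B P)
    {b : A} (hb : b ∈ B) (a : A) : P (b * a) = b * P a := by
  obtain ⟨e, he, hea, hae⟩ := hLU.exists_isIdem a
  calc P (b * a) = P (b * a * e) := by rw [mul_assoc, hae]
    _ = b * (P a * e) := by rw [hP.2.2 a b hb e he.1, mul_assoc]
    _ = b * P a := by rw [(hP.map_mul_idem he hea hae).2]

theorem IsCondExp.map_mul_right (hLU : HasLocalUnits B) {P : A →ₗ[R] A} (hP : IsCondExp B P)
    {b : A} (hb : b ∈ B) (a : A) : P (a * b) = P a * b := by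
  obtain ⟨e, he, hea, hae⟩ := hLU.exists_isIdem a
  calc P (a * b) = P (e * a * b) := by rw [hea]
    _ = e * P a * b := hP.2.2 a e he.1 b hb
    _ = P a * b := by rw [(hP.map_mul_idem he hea hae).1]

section Normaliser

variable {n k : A}

theorem IsCondExp.map_eq_mul_dagger_mul (hLU : HasLocalUnits B) (hnk : IsDagger B n k)
    {P : A →ₗ[R] A} (hP : IsCondExp B P) : P n = n * (k * P n) := by
  conv_lhs => rw [← hnk.2.1]
  rw [hP.map_mul_left hLU (hnk.mul_mem hLU), mul_assoc]

theorem IsCondExp.dagger_mul_map_mem (hComm : ∀ x ∈ B, ∀ y ∈ B, x * y = y * x)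
    (hLU : HasLocalUnits B) (hMax : ∀ a : A, (∀ b ∈ B, a * b = b * a) → a ∈ B)
    (hnk : IsDagger B n k) {P : A →ₗ[R] A} (hP : IsCondExp B P) : k * P n ∈ B := by
  have hkn : k * n ∈ B := hnk.symm.mul_mem hLU
  refine hMax _ fun b hb => ?_
  have hnbkn : n * b * k * n = n * b := by
    rw [mul_assoc _ k n, mul_assoc n b, hComm b hb _ hkn, ← mul_assoc, ← mul_assoc, hnk.2.1]
  have hknbk : k * (n * b * k) = b * k := by
    rw [← mul_assoc, ← mul_assoc, hComm _ hkn b hb, mul_assoc b, hnk.1]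
  calc k * P n * b = k * P (n * b * k * n) := by
        rw [hnbkn, hP.map_mul_right hLU hb, mul_assoc]
    _ = b * (k * P n) := by
        rw [hP.map_mul_left hLU (hnk.2.2 b hb).2, ← mul_assoc, hknbk, mul_assoc]

theorem IsCondExp.map_eq_map_mul_dagger_mul (hComm : ∀ x ∈ B, ∀ y ∈ B, x * y = y * x)
    (hLU : HasLocalUnits B) (hMax : ∀ a : A, (∀ b ∈ B, a * b = b * a) → a ∈ B)
    (hnk : IsDagger B n k) {P Q : A →ₗ[R] A} (hP : IsCondExp B P) (hQ : IsCondExp B Q) :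
    P n = Q n * (k * P n) := by
  calc P n = Q (n * (k * P n)) := by rw [← hP.map_eq_mul_dagger_mul hLU hnk, hQ.2.1 _ (hP.1 n)]
    _ = Q n * (k * P n) := hQ.map_mul_right hLU (hP.dagger_mul_map_mem hComm hLU hMax hnk) n

theorem IsCondExp.map_eq_of_isDagger (hComm : ∀ x ∈ B, ∀ y ∈ B, x * y = y * x)
    (hLU : HasLocalUnits B) (hMax : ∀ a : A, (∀ b ∈ B, a * b = b * a) → a ∈ B)
    (hnk : IsDagger B n k) {P Q : A →ₗ[R] A} (hP : IsCondExp B P) (hQ : IsCondExp B Q) :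
    P n = Q n := by
  have hu := hP.dagger_mul_map_mem hComm hLU hMax hnk
  have hv := hQ.dagger_mul_map_mem hComm hLU hMax hnk
  have hPQ := hP.map_eq_map_mul_dagger_mul hComm hLU hMax hnk hQ
  have hQQ := hQ.map_eq_map_mul_dagger_mul hComm hLU hMax hnk hQ
  have hQP := hQ.map_eq_map_mul_dagger_mul hComm hLU hMax hnk hP
  calc P n = Q n * (k * Q n) * (k * P n) := by rw [← hQQ, ← hPQ]
    _ = Q n * (k * P n) * (k * Q n) := by rw [mul_assoc, hComm _ hv _ hu, ← mul_assoc]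
    _ = Q n := by rw [← hPQ, ← hQP]

end Normaliser

end QCP

theorem cartan_unique_expectation_general {R : Type*} [CommRing R] {A : Type*}
    [NonUnitalRing A] [Module R A]
    (B : NonUnitalSubalgebra R A)
    (hC : QCP.IsCartanPair B)
    (P₁ P₂ : A →ₗ[R] A)
    (hP₁ : QCP.IsCondExp B P₁) (hP₂ : QCP.IsCondExp B P₂) :
    P₁ = P₂ := by
  obtain ⟨⟨hComm, -, hLU, -, hNspan, -⟩, hMax⟩ := hC
  exact LinearMap.ext_on hNspan fun n ⟨k, hnk⟩ => hP₁.map_eq_of_isDagger hComm hLU hMax hnk hP₂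

/-- an algebraic Cartan pair has a unique conditional expectation. -/
theorem cartan_unique_expectation {R : Type*} [CommRing R] {A : Type*}
    [NonUnitalRing A] [Module R A] [SMulCommClass R A A] [IsScalarTower R A A]
    (B : NonUnitalSubalgebra R A)
    (hC : QCP.IsCartanPair B)
    (P₁ P₂ : A →ₗ[R] A)
    (hP₁ : QCP.IsCondExp B P₁) (hP₂ : QCP.IsCondExp B P₂) :
    P₁ = P₂ :=
  cartan_unique_expectation_general B hC P₁ P₂ hP₁ hP₂
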